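/- arXiv:1211.1872 — 6 statements merged into one kernel-verified Lean document; each statement's English description precedes it below -/
import Mathlib

section
/- For any complex matrix A ∈ ℂ^{n×n}, the spectral radius of A^◊ equals ρ(A · conj A)^{1/2}, where A^◊ = [[A₂, A₁], [A₁, -A₂]]. -/
/-!
Over `ℂ`, `S = [[1, i], [i, 1]]` intertwines `A^◊` with `N = [[0, A], [conj A, 0]]`:
`A^◊ S = S N`. Hence `A^◊` and `N` have the same spectrum, and
`N² = diag(A conj A, conj A · A)` has the spectrum of `A conj A`, since `XY` and `YX` share
their characteristic polynomial. The spectral mapping theorem for `z ↦ z²` then gives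
`ρ(A^◊)² = ρ(A conj A)`.
-/

open Matrix

/-- For a complex matrix `A = A₁ + A₂ i`, the real block matrix `[[A₁, -A₂], [A₂, A₁]]`. -/
noncomputable def heart {n m : ℕ} (A : Matrix (Fin n) (Fin m) ℂ) :
    Matrix (Fin n ⊕ Fin n) (Fin m ⊕ Fin m) ℝ :=
  Matrix.fromBlocks (A.map Complex.re) (-(A.map Complex.im))
    (A.map Complex.im) (A.map Complex.re)

/-- For a complex matrix `A = A₁ + A₂ i`, the real block matrix `[[A₂, A₁], [A₁, -A₂]]`. -/
noncomputable def diam {n m : ℕ} (A : Matrix (Fin n) (Fin m) ℂ) :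
    Matrix (Fin n ⊕ Fin n) (Fin m ⊕ Fin m) ℝ :=
  Matrix.fromBlocks (A.map Complex.im) (A.map Complex.re)
    (A.map Complex.re) (-(A.map Complex.im))

theorem spectrum_eq_of_mul_eq_mul_of_isUnit {R A : Type*} [CommSemiring R] [Ring A]
    [Algebra R A] {a b s : A} (hs : IsUnit s) (h : a * s = s * b) :
    spectrum R a = spectrum R b := by
  obtain ⟨u, rfl⟩ := hs
  rw [← Units.eq_mul_inv_iff_mul_eq, mul_assoc] at h
  rw [h, ← mul_assoc, spectrum.units_conjugate]

theorem spectralRadius_pow {𝕜 A : Type*} [NormedField 𝕜] [IsAlgClosed 𝕜] [Ring A]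
    [Algebra 𝕜 A] (a : A) {n : ℕ} (hn : n ≠ 0) :
    spectralRadius 𝕜 (a ^ n) = spectralRadius 𝕜 a ^ n := by
  simp only [spectralRadius, spectrum.map_pow_of_pos a (Nat.pos_of_ne_zero hn), iSup_image,
    ENNReal.iSup₂_pow_of_ne_zero _ hn, nnnorm_pow, ENNReal.coe_pow]

namespace Matrix

variable {K m n : Type*} [Field K] [Fintype m] [Fintype n] [DecidableEq m] [DecidableEq n]

theorem spectrum_fromBlocks_zero₁₂_zero₂₁ (B : Matrix m m K) (C : Matrix n n K) :
    spectrum K (fromBlocks B 0 0 C) = spectrum K B ∪ spectrum K C := by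
  ext μ
  simp only [Set.mem_union, spectrum.mem_iff, Algebra.algebraMap_eq_smul_one, ← fromBlocks_one,
    fromBlocks_smul, smul_zero, sub_eq_add_neg, fromBlocks_neg, fromBlocks_add, neg_zero, add_zero,
    isUnit_iff_isUnit_det, det_fromBlocks_zero₂₁, IsUnit.mul_iff, not_and_or]

theorem spectrum_mul_comm (A B : Matrix n n K) : spectrum K (A * B) = spectrum K (B * A) := by
  ext μ
  simp only [mem_spectrum_iff_isRoot_charpoly, charpoly_mul_comm]

end Matrix

theorem isUnit_fromBlocks_one_I_smul_one {m : Type*} [Fintype m] [DecidableEq m] :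
    IsUnit (fromBlocks 1 (Complex.I • 1) (Complex.I • 1) 1 : Matrix (m ⊕ m) (m ⊕ m) ℂ) := by
  rw [isUnit_iff_isUnit_det, det_fromBlocks_one₁₁, smul_mul_smul, Complex.I_mul_I, mul_one]
  simp [← two_smul ℂ]

theorem diam_map_mul_fromBlocks {n : ℕ} (A : Matrix (Fin n) (Fin n) ℂ) :
    (diam A).map (algebraMap ℝ ℂ) * fromBlocks 1 (Complex.I • 1) (Complex.I • 1) 1 =
      fromBlocks 1 (Complex.I • 1) (Complex.I • 1) 1 *
        fromBlocks 0 A (A.map (starRingEnd ℂ)) 0 := by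
  rw [diam, fromBlocks_map, fromBlocks_multiply, fromBlocks_multiply]
  congr 1 <;> ext i j <;> simp [Complex.ext_iff]

theorem spectralRadius_diam {n : ℕ} (A : Matrix (Fin n) (Fin n) ℂ) :
    spectralRadius ℂ ((diam A).map (algebraMap ℝ ℂ)) =
      (spectralRadius ℂ (A * A.map (starRingEnd ℂ))) ^ (1 / 2 : ℝ) := by
  set N := fromBlocks 0 A (A.map (starRingEnd ℂ)) 0
  have hsim : spectrum ℂ ((diam A).map (algebraMap ℝ ℂ)) = spectrum ℂ N :=
    spectrum_eq_of_mul_eq_mul_of_isUnit isUnit_fromBlocks_one_I_smul_one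
      (diam_map_mul_fromBlocks A)
  have hsq : spectrum ℂ (N ^ 2) = spectrum ℂ (A * A.map (starRingEnd ℂ)) := by
    rw [sq, fromBlocks_multiply]
    simp [spectrum_fromBlocks_zero₁₂_zero₂₁, spectrum_mul_comm]
  have hrad : spectralRadius ℂ (A * A.map (starRingEnd ℂ)) =
      spectralRadius ℂ ((diam A).map (algebraMap ℝ ℂ)) ^ 2 := by
    calc spectralRadius ℂ (A * A.map (starRingEnd ℂ)) = spectralRadius ℂ (N ^ 2) := by
          simp only [spectralRadius, hsq]
      _ = spectralRadius ℂ N ^ 2 := spectralRadius_pow N two_ne_zero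
      _ = spectralRadius ℂ ((diam A).map (algebraMap ℝ ℂ)) ^ 2 := by
          simp only [spectralRadius, hsim]
  rw [hrad, one_div]
  exact_mod_cast (ENNReal.pow_rpow_inv_natCast two_ne_zero _).symm
end

section
/- The real matrix A^◊ = [[A₂, A₁], [A₁, -A₂]] is normal if and only if A is con-normal, namely A^* A = conj(A A^*). -/
open Matrix

/-!
`heart` is the standard realification: it is injective, multiplicative and turns `ᴴ` into `ᵀ`.
With the block swap `σ = [[0, 1], [1, 0]]` we have `diam A = σ * heart A` and
`σ * heart A * σ = heart (conj A)`, hence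
`diam A * (diam A)ᵀ = heart (conj (A * Aᴴ))` and `(diam A)ᵀ * diam A = heart (Aᴴ * A)`,
and injectivity of `heart` gives the equivalence.
-/

namespace Matrix

variable {l m n : Type*}

theorem map_re_mul [Fintype m] (A : Matrix l m ℂ) (B : Matrix m n ℂ) :
    (A * B).map Complex.re =
      A.map Complex.re * B.map Complex.re - A.map Complex.im * B.map Complex.im := by
  ext i j
  simp [mul_apply, Finset.sum_sub_distrib]

theorem map_im_mul [Fintype m] (A : Matrix l m ℂ) (B : Matrix m n ℂ) :
    (A * B).map Complex.im =
      A.map Complex.re * B.map Complex.im + A.map Complex.im * B.map Complex.re := by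
  ext i j
  simp [mul_apply, Finset.sum_add_distrib]

theorem conjTranspose_map_re (A : Matrix m n ℂ) : Aᴴ.map Complex.re = (A.map Complex.re)ᵀ := by
  ext i j
  simp

theorem conjTranspose_map_im (A : Matrix m n ℂ) : Aᴴ.map Complex.im = -(A.map Complex.im)ᵀ := by
  ext i j
  simp

theorem map_conj_map_re (A : Matrix m n ℂ) :
    (A.map (starRingEnd ℂ)).map Complex.re = A.map Complex.re := by
  ext i j
  simp

theorem map_conj_map_im (A : Matrix m n ℂ) :
    (A.map (starRingEnd ℂ)).map Complex.im = -A.map Complex.im := by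
  ext i j
  simp

end Matrix

section Realification

variable {n m k : ℕ}

theorem heart_injective : Function.Injective (heart : Matrix (Fin n) (Fin m) ℂ → _) := by
  intro A B h
  obtain ⟨hre, -, him, -⟩ := fromBlocks_inj.mp h
  ext i j
  exact Complex.ext (congrFun₂ hre i j) (congrFun₂ him i j)

theorem heart_mul (A : Matrix (Fin n) (Fin m) ℂ) (B : Matrix (Fin m) (Fin k) ℂ) :
    heart (A * B) = heart A * heart B := by
  simp only [heart, fromBlocks_multiply, map_re_mul, map_im_mul, Matrix.mul_neg, Matrix.neg_mul]
  congr 1 <;> abel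

theorem heart_conjTranspose (A : Matrix (Fin n) (Fin m) ℂ) : heart Aᴴ = (heart A)ᵀ := by
  simp [heart, fromBlocks_transpose, conjTranspose_map_re, conjTranspose_map_im]

def swapBlocks (n : ℕ) : Matrix (Fin n ⊕ Fin n) (Fin n ⊕ Fin n) ℝ := fromBlocks 0 1 1 0

theorem transpose_swapBlocks : (swapBlocks n)ᵀ = swapBlocks n := by
  simp [swapBlocks, fromBlocks_transpose]

theorem swapBlocks_mul_self : swapBlocks n * swapBlocks n = 1 := by
  simp [swapBlocks, fromBlocks_multiply, fromBlocks_one]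

theorem diam_eq_swapBlocks_mul_heart (A : Matrix (Fin n) (Fin m) ℂ) :
    diam A = swapBlocks n * heart A := by
  simp [diam, heart, swapBlocks, fromBlocks_multiply]

theorem swapBlocks_mul_heart_mul_swapBlocks (A : Matrix (Fin n) (Fin m) ℂ) :
    swapBlocks n * heart A * swapBlocks m = heart (A.map (starRingEnd ℂ)) := by
  rw [heart, heart, map_conj_map_re, map_conj_map_im]
  simp [swapBlocks, fromBlocks_multiply]

theorem diam_mul_transpose_diam (A : Matrix (Fin n) (Fin m) ℂ) :
    diam A * (diam A)ᵀ = heart ((A * Aᴴ).map (starRingEnd ℂ)) := by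
  rw [← swapBlocks_mul_heart_mul_swapBlocks, heart_mul, heart_conjTranspose,
    diam_eq_swapBlocks_mul_heart, transpose_mul, transpose_swapBlocks]
  simp only [Matrix.mul_assoc]

theorem transpose_diam_mul_diam (A : Matrix (Fin n) (Fin m) ℂ) :
    (diam A)ᵀ * diam A = heart (Aᴴ * A) := by
  rw [heart_mul, heart_conjTranspose, diam_eq_swapBlocks_mul_heart, transpose_mul,
    transpose_swapBlocks, Matrix.mul_assoc, ← Matrix.mul_assoc (swapBlocks n),
    swapBlocks_mul_self, Matrix.one_mul]

end Realification

theorem diam_normal_iff {n : ℕ} (A : Matrix (Fin n) (Fin n) ℂ) :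
    diam A * (diam A)ᵀ = (diam A)ᵀ * diam A ↔
      Aᴴ * A = (A * Aᴴ).map (starRingEnd ℂ) := by
  rw [diam_mul_transpose_diam, transpose_diam_mul_diam, heart_injective.eq_iff, eq_comm]
end

section
/- Let A ∈ ℂ^{n×n} be invertible. Then an invertible Hermitian matrix X solves X + A^* (conj X)⁻¹ A = Iₙ if and only if Y = Iₙ − conj X solves Y + A (conj Y)⁻¹ A^* = Iₙ (in particular Y is invertible). -/
open Matrix
open scoped ComplexOrder

namespace Matrix

variable {ι R : Type*} [DecidableEq ι] [CommRing R]

theorem mul_nonsing_inv_mul_eq_iff [Fintype ι] {A B C M : Matrix ι ι R} (hA : IsUnit A.det)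
    (hM : IsUnit M.det) (hC : IsUnit C.det) :
    M * C⁻¹ * A = B ↔ A * B⁻¹ * M = C := by
  constructor
  · rintro rfl
    rw [mul_inv_rev, mul_inv_rev, nonsing_inv_nonsing_inv _ hC]
    simp only [mul_nonsing_inv_cancel_left _ _ hA, nonsing_inv_mul_cancel_right _ _ hM]
  · rintro rfl
    have hB : IsUnit B.det := by
      rw [det_mul, det_mul] at hC
      exact isUnit_nonsing_inv_det_iff.mp
        (isUnit_of_mul_isUnit_right (isUnit_of_mul_isUnit_left hC))
    rw [mul_inv_rev, mul_inv_rev, nonsing_inv_nonsing_inv _ hB]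
    simp only [mul_nonsing_inv_cancel_left _ _ hM, nonsing_inv_mul_cancel_right _ _ hA]

theorem map_star_one_sub_map_star [StarRing R] (X : Matrix ι ι R) :
    (1 - X.map (starRingEnd R)).map (starRingEnd R) = 1 - X := by
  ext i j
  simp [one_apply, apply_ite (starRingEnd R)]

theorem isUnit_det_map_star [Fintype ι] [StarRing R] {X : Matrix ι ι R} (hX : IsUnit X.det) :
    IsUnit (X.map (starRingEnd R)).det := by
  rw [← RingHom.mapMatrix_apply, ← RingHom.map_det]
  exact hX.map _

end Matrix

theorem eq_iff_dual_general {n : ℕ} (A X : Matrix (Fin n) (Fin n) ℂ)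
    (hA : IsUnit A.det) (hXinv : IsUnit X.det) :
    X + Aᴴ * (X.map (starRingEnd ℂ))⁻¹ * A = 1 ↔
      (1 - X.map (starRingEnd ℂ)) +
        A * ((1 - X.map (starRingEnd ℂ)).map (starRingEnd ℂ))⁻¹ * Aᴴ = 1 := by
  have hAH : IsUnit Aᴴ.det := by rw [det_conjTranspose]; exact hA.star
  rw [map_star_one_sub_map_star, ← eq_sub_iff_add_eq', ← eq_sub_iff_add_eq', sub_sub_cancel]
  exact mul_nonsing_inv_mul_eq_iff hA hAH (isUnit_det_map_star hXinv)

theorem eq_iff_dual {n : ℕ} (A X : Matrix (Fin n) (Fin n) ℂ)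
    (hA : IsUnit A.det) (hX : X.IsHermitian) (hXinv : IsUnit X.det)
    (hY : IsUnit (1 - X.map (starRingEnd ℂ)).det) :
    X + Aᴴ * (X.map (starRingEnd ℂ))⁻¹ * A = 1 ↔
      (1 - X.map (starRingEnd ℂ)) +
        A * ((1 - X.map (starRingEnd ℂ)).map (starRingEnd ℂ))⁻¹ * Aᴴ = 1 :=
  eq_iff_dual_general A X hA hXinv
end

section
/- If the equation X + A^* (conj X)⁻¹ A = Iₙ has a Hermitian positive definite solution X, then Iₙ − A A^* − conj(A^* A) is positive definite; in particular ‖A‖ < 1. -/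
/-!
Since `X` is Hermitian, `conj X = Xᵀ`. The equation exhibits `X ≻ 0` as the Schur complement
`1 - Aᴴ (Xᵀ)⁻¹ A` of the block matrix `[[Xᵀ, A], [Aᴴ, 1]]`, so its other Schur complement
`Xᵀ - A Aᴴ` is positive definite as well; it also gives `1 - X = Aᴴ (Xᵀ)⁻¹ A ⪰ 0`, hence
`X⁻¹ ⪰ 1`. Transposing the equation, `Xᵀ = 1 - Aᵀ X⁻¹ conj A`, so that
`1 - A Aᴴ - conj (Aᴴ A) = (Xᵀ - A Aᴴ) + Aᵀ (X⁻¹ - 1) conj A ≻ 0`.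
Adding `A Aᴴ` and conjugating yields `1 - Aᴴ A ≻ 0`, and in the C⋆-algebra of matrices
`‖A‖² = ‖Aᴴ A‖ < 1`.
-/

open Matrix
open scoped ComplexOrder

/-- The operator norm (spectral norm) of a matrix, i.e. the norm of the induced
linear map between Euclidean spaces. -/
noncomputable def opNorm {𝕜 : Type*} [RCLike 𝕜] {n m : Type*} [Fintype n] [Fintype m]
    [DecidableEq m] (A : Matrix n m 𝕜) : ℝ :=
  ‖LinearMap.toContinuousLinearMap (Matrix.toEuclideanLin A)‖

namespace Matrix

variable {𝕜 m n : Type*} [RCLike 𝕜]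

lemma IsHermitian.map_starRingEnd {M : Matrix m m 𝕜} (hM : M.IsHermitian) :
    M.map (starRingEnd 𝕜) = Mᵀ :=
  congrArg (·ᵀ) hM.eq

variable [Fintype m] [DecidableEq m] [Fintype n] [DecidableEq n]

lemma PosDef.posSemidef_inv_sub_one {X : Matrix m m 𝕜} (hX : X.PosDef)
    (h : (1 - X).PosSemidef) : (X⁻¹ - 1).PosSemidef := by
  have := hX.isUnit.invertible
  have hsplit : X⁻¹ - 1 = (1 - X) + (1 - X)ᴴ * X⁻¹ * (1 - X) := by
    rw [h.isHermitian.eq]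
    simp only [sub_mul, mul_sub, one_mul, mul_one, inv_mul_of_invertible, mul_inv_of_invertible]
    abel
  rw [hsplit]
  exact h.add (hX.inv.posSemidef.conjTranspose_mul_mul_same _)

lemma PosDef.posDef_sub_mul_conjTranspose {Y : Matrix m m 𝕜} (hY : Y.PosDef) (B : Matrix m n 𝕜)
    (h : (1 - Bᴴ * Y⁻¹ * B).PosDef) : (Y - B * Bᴴ).PosDef := by
  -- Both are Schur complements in `[[Y, B], [Bᴴ, 1]]`: semidefiniteness passes through the block
  -- matrix, invertibility through its determinant.
  have := hY.isUnit.invertible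
  have : Invertible (1 : Matrix n n 𝕜) := invertibleOne
  have hblock : (fromBlocks Y B Bᴴ 1).PosSemidef :=
    (PosDef.fromBlocks₁₁ B 1 hY).2 h.posSemidef
  have hschur : (Y - B * Bᴴ).PosSemidef := by
    simpa using (PosDef.fromBlocks₂₂ Y B PosDef.one).1 hblock
  rw [hschur.posDef_iff_det_ne_zero]
  have hdet := (det_fromBlocks₁₁ Y B Bᴴ 1).symm.trans (det_fromBlocks₂₂ Y B Bᴴ 1)
  simp only [invOf_eq_nonsing_inv, invOf_one, Matrix.mul_one, det_one, one_mul] at hdet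
  rw [← hdet]
  exact mul_ne_zero hY.det_pos.ne' h.det_pos.ne'

lemma posDef_one_sub_mul_conjTranspose_sub_transpose {X A : Matrix m m 𝕜} (hX : X.PosDef)
    (h : X + Aᴴ * Xᵀ⁻¹ * A = 1) : (1 - A * Aᴴ - (Aᴴ * A)ᵀ).PosDef := by
  have hX_eq : X = 1 - Aᴴ * Xᵀ⁻¹ * A := eq_sub_of_add_eq h
  have hXt_sub : (Xᵀ - A * Aᴴ).PosDef :=
    hX.transpose.posDef_sub_mul_conjTranspose A (hX_eq ▸ hX)
  have hX_inv_sub : (X⁻¹ - 1).PosSemidef := by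
    refine hX.posSemidef_inv_sub_one ?_
    rw [hX_eq, sub_sub_cancel]
    exact hX.transpose.inv.posSemidef.conjTranspose_mul_mul_same A
  have h_transpose : Xᵀ + Aᵀ * X⁻¹ * Aᴴᵀ = 1 := by
    simpa only [transpose_add, transpose_mul, transpose_nonsing_inv, transpose_transpose,
      transpose_one, mul_assoc] using congrArg transpose h
  have hsplit : 1 - A * Aᴴ - (Aᴴ * A)ᵀ = (Xᵀ - A * Aᴴ) + Aᵀ * (X⁻¹ - 1) * Aᴴᵀ := by
    rw [eq_sub_of_add_eq h_transpose, transpose_mul]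
    noncomm_ring
  have h_correction := hX_inv_sub.conjTranspose_mul_mul_same Aᴴᵀ
  rw [← conjTranspose_transpose_eq_transpose_conjTranspose, conjTranspose_conjTranspose]
    at h_correction
  rw [hsplit]
  exact hXt_sub.add_posSemidef h_correction

end Matrix

lemma CStarAlgebra.norm_lt_one_of_isStrictlyPositive_one_sub {A : Type*} [CStarAlgebra A]
    [PartialOrder A] [StarOrderedRing A] {a : A} (ha : 0 ≤ a) (h : IsStrictlyPositive (1 - a)) :
    ‖a‖ < 1 := by
  nontriviality A
  have hmem : 1 - ‖a‖ ∈ spectrum ℝ (1 - a) := by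
    rw [← map_one (algebraMap ℝ A), ← spectrum.singleton_sub_eq]
    exact Set.sub_mem_sub rfl (norm_mem_spectrum_of_nonneg ha)
  linarith [h.spectrum_pos hmem]

open scoped Matrix.Norms.L2Operator MatrixOrder in
lemma Matrix.opNorm_lt_one_of_posDef_one_sub_conjTranspose_mul_self {m n : Type*} [Fintype m] [Fintype n]
    [DecidableEq n] {A : Matrix m n ℂ} (h : (1 - Aᴴ * A).PosDef) : opNorm A < 1 := by
  have hAA : ‖Aᴴ * A‖ < 1 := CStarAlgebra.norm_lt_one_of_isStrictlyPositive_one_sub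
    (posSemidef_conjTranspose_mul_self A).nonneg h.isStrictlyPositive
  rw [l2_opNorm_conjTranspose_mul_self] at hAA
  change ‖A‖ < 1
  nlinarith [norm_nonneg A]

theorem necessary_condition {n : ℕ} (A : Matrix (Fin n) (Fin n) ℂ)
    (h : ∃ X : Matrix (Fin n) (Fin n) ℂ, X.PosDef ∧
      X + Aᴴ * (X.map (starRingEnd ℂ))⁻¹ * A = 1) :
    (1 - A * Aᴴ - (Aᴴ * A).map (starRingEnd ℂ)).PosDef ∧ opNorm A < 1 := by
  obtain ⟨X, hX, hXA⟩ := h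
  rw [hX.isHermitian.map_starRingEnd] at hXA
  rw [(isHermitian_conjTranspose_mul_self A).map_starRingEnd]
  have hpos := posDef_one_sub_mul_conjTranspose_sub_transpose hX hXA
  refine ⟨hpos, opNorm_lt_one_of_posDef_one_sub_conjTranspose_mul_self ?_⟩
  have h_transpose : (1 - (Aᴴ * A)ᵀ).PosDef := by
    rw [← sub_add_cancel (1 - (Aᴴ * A)ᵀ) (A * Aᴴ), sub_right_comm]
    exact hpos.add_posSemidef (posSemidef_self_mul_conjTranspose A)
  simpa using h_transpose.transpose
end

section
/- If X is a Hermitian positive definite solution of X + A^* (conj X)⁻¹ A = Iₙ, then X > conj A · Aᵀ (i.e., X − conj(A)·Aᵀ = X − conj(A A^*) is positive definite) and X < Iₙ − A^* A. -/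
/-!
Since `X` is Hermitian, `conj X = Xᵀ`, and the equation reads `1 - X = A^* (Xᵀ)⁻¹ A`; so
`0 < X < 1`, and likewise `0 < Xᵀ < 1`. For `0 < Z < 1` we get `Z⁻¹ > 1` from the identity
`Z⁻¹ - 1 = (1 - Z) + (Z⁻¹ - 1) Z (Z⁻¹ - 1)`. Hence `1 - A^* A - X = A^* ((Xᵀ)⁻¹ - 1) A > 0`.
Inverting the equation gives `Xᵀ = A (1 - X)⁻¹ A^*`, so `Xᵀ - A A^* = A ((1 - X)⁻¹ - 1) A^* > 0`,
and transposing gives the lower bound.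
-/

open Matrix
open scoped ComplexOrder

namespace Matrix

variable {n K : Type*} [Fintype n] [DecidableEq n] [Field K] [PartialOrder K] [StarRing K]
  {A X Y : Matrix n n K}

theorem posDef_one_sub_of_eq_conjTranspose_mul_inv_mul (hY : Y.PosDef) (hA : IsUnit A)
    (h : 1 - X = Aᴴ * Y⁻¹ * A) : (1 - X).PosDef := by
  rw [h, ← star_eq_conjTranspose]
  exact hA.posDef_star_left_conjugate_iff.2 hY.inv

variable [AddLeftMono K]

theorem PosDef.inv_sub_one {Z : Matrix n n K} (hZ : Z.PosDef) (h : (1 - Z).PosDef) :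
    (Z⁻¹ - 1).PosDef := by
  have hdet : IsUnit Z.det := (isUnit_iff_isUnit_det Z).1 hZ.isUnit
  have hH : (Z⁻¹ - 1)ᴴ = Z⁻¹ - 1 := (hZ.inv.isHermitian.sub isHermitian_one).eq
  have key : Z⁻¹ - 1 = (1 - Z) + (Z⁻¹ - 1)ᴴ * Z * (Z⁻¹ - 1) := by
    simp only [hH, sub_mul, mul_sub, one_mul, mul_one, nonsing_inv_mul Z hdet,
      mul_nonsing_inv Z hdet]
    abel
  rw [key]
  exact h.add_posSemidef (hZ.posSemidef.conjTranspose_mul_mul_same _)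

theorem posDef_sub_mul_conjTranspose_of_one_sub_eq (hX : X.PosDef) (hY : Y.PosDef)
    (hA : IsUnit A) (h : 1 - X = Aᴴ * Y⁻¹ * A) : (Y - A * Aᴴ).PosDef := by
  have h1X := posDef_one_sub_of_eq_conjTranspose_mul_inv_mul hY hA h
  have hAdet : IsUnit A.det := (isUnit_iff_isUnit_det A).1 hA
  have hY_eq : Y = A * (1 - X)⁻¹ * Aᴴ := by
    rw [h, mul_inv_rev, mul_inv_rev,
      nonsing_inv_nonsing_inv Y ((isUnit_iff_isUnit_det Y).1 hY.isUnit)]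
    simp only [← mul_assoc, mul_nonsing_inv A hAdet, one_mul]
    rw [mul_assoc, nonsing_inv_mul Aᴴ ((isUnit_iff_isUnit_det Aᴴ).1 hA.star), mul_one]
  have hsub : Y - A * Aᴴ = A * ((1 - X)⁻¹ - 1) * star A := by
    rw [star_eq_conjTranspose, mul_sub, sub_mul, mul_one, ← hY_eq]
  rw [hsub]
  exact hA.posDef_star_right_conjugate_iff.2 (h1X.inv_sub_one (by simpa using hX))

theorem posDef_one_sub_conjTranspose_mul_sub_of_one_sub_eq (hY : Y.PosDef)
    (h1Y : (1 - Y).PosDef) (hA : IsUnit A) (h : 1 - X = Aᴴ * Y⁻¹ * A) :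
    (1 - Aᴴ * A - X).PosDef := by
  have hsub : 1 - Aᴴ * A - X = star A * (Y⁻¹ - 1) * A := by
    rw [star_eq_conjTranspose, mul_sub, sub_mul, mul_one, ← h]
    abel
  rw [hsub]
  exact hA.posDef_star_left_conjugate_iff.2 (hY.inv_sub_one h1Y)

end Matrix

theorem solution_bounds {n : ℕ} (A X : Matrix (Fin n) (Fin n) ℂ)
    (hA : IsUnit A.det) (hX : X.PosDef)
    (heq : X + Aᴴ * (X.map (starRingEnd ℂ))⁻¹ * A = 1) :
    (X - A.map (starRingEnd ℂ) * Aᵀ).PosDef ∧ ((1 - Aᴴ * A) - X).PosDef := by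
  have hA' : IsUnit A := (isUnit_iff_isUnit_det A).2 hA
  have hconj : X.map (starRingEnd ℂ) = Xᵀ := by
    change Xᴴᵀ = Xᵀ
    rw [hX.isHermitian.eq]
  have h : 1 - X = Aᴴ * (Xᵀ)⁻¹ * A := by
    rw [← hconj]
    exact (eq_sub_of_add_eq' heq).symm
  have h1X := posDef_one_sub_of_eq_conjTranspose_mul_inv_mul hX.transpose hA' h
  constructor
  · have hlow := (posDef_sub_mul_conjTranspose_of_one_sub_eq hX hX.transpose hA' h).transpose
    rwa [transpose_sub, transpose_transpose, transpose_mul, conjTranspose_transpose] at hlow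
  · refine posDef_one_sub_conjTranspose_mul_sub_of_one_sub_eq hX.transpose ?_ hA' h
    simpa using h1X.transpose
end

section
/- If X is a Hermitian positive definite solution of X + A^* (conj X)⁻¹ A = Iₙ, then X > conj(A) (Iₙ − A A^*)⁻¹ Aᵀ, i.e., X − conj(A)(Iₙ − A A^*)⁻¹ Aᵀ is positive definite (note Iₙ − A A^* is positive definite in this situation). -/
/-!
Write `X̄ = Xᵀ` and `Ā = Aᵀᴴ`. The equation says that `X = 1 - Aᴴ X̄⁻¹ A` is the Schur complement
of `X̄` in `[[X̄, A], [Aᴴ, 1]]`, and its transpose says `X̄ + Aᵀ X⁻¹ Ā = 1`. Since a Hermitian block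
matrix with a positive definite pivot is positive definite iff the Schur complement of either pivot
is, `X > 0` gives `X̄ - AAᴴ > 0`, hence `1 - AAᴴ = (X̄ - AAᴴ) + Aᵀ X⁻¹ Ā > 0`. In the block matrix
`[[1 - AAᴴ, Aᵀ], [Ā, X]]` the Schur complement of `X` is `X̄ - AAᴴ > 0`, so that of `1 - AAᴴ`,
namely `X - Ā (1 - AAᴴ)⁻¹ Aᵀ`, is positive definite too.
-/

open Matrix
open scoped ComplexOrder

namespace Matrix

variable {𝕜 m n : Type*} [RCLike 𝕜] [Fintype m] [Fintype n] [DecidableEq m] [DecidableEq n]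

theorem posDef_iff_of_posSemidef_iff_of_det_eq_mul {M : Matrix m m 𝕜} {S : Matrix n n 𝕜} {c : 𝕜}
    (hc : c ≠ 0) (hpsd : M.PosSemidef ↔ S.PosSemidef) (hdet : M.det = c * S.det) :
    M.PosDef ↔ S.PosDef := by
  refine ⟨fun hM => ?_, fun hS => ?_⟩
  · rw [(hpsd.mp hM.posSemidef).posDef_iff_det_ne_zero]
    exact right_ne_zero_of_mul (hdet ▸ hM.det_pos.ne')
  · rw [(hpsd.mpr hS.posSemidef).posDef_iff_det_ne_zero, hdet]
    exact mul_ne_zero hc hS.det_pos.ne'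

theorem PosDef.posDef_fromBlocks₁₁_iff {A : Matrix m m 𝕜} (B : Matrix m n 𝕜) (D : Matrix n n 𝕜)
    (hA : A.PosDef) : (fromBlocks A B Bᴴ D).PosDef ↔ (D - Bᴴ * A⁻¹ * B).PosDef := by
  let := hA.isUnit.invertible
  refine posDef_iff_of_posSemidef_iff_of_det_eq_mul hA.det_pos.ne' (fromBlocks₁₁ B D hA) ?_
  rw [det_fromBlocks₁₁, invOf_eq_nonsing_inv]

theorem PosDef.posDef_fromBlocks₂₂_iff (A : Matrix m m 𝕜) (B : Matrix m n 𝕜) {D : Matrix n n 𝕜}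
    (hD : D.PosDef) : (fromBlocks A B Bᴴ D).PosDef ↔ (A - B * D⁻¹ * Bᴴ).PosDef := by
  let := hD.isUnit.invertible
  refine posDef_iff_of_posSemidef_iff_of_det_eq_mul hD.det_pos.ne' (fromBlocks₂₂ A B hD) ?_
  rw [det_fromBlocks₂₂, invOf_eq_nonsing_inv]

theorem PosDef.posDef_schur_complement_comm {A : Matrix m m 𝕜} (B : Matrix m n 𝕜)
    {D : Matrix n n 𝕜} (hA : A.PosDef) (hD : D.PosDef) :
    (D - Bᴴ * A⁻¹ * B).PosDef ↔ (A - B * D⁻¹ * Bᴴ).PosDef :=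
  (hA.posDef_fromBlocks₁₁_iff B D).symm.trans (posDef_fromBlocks₂₂_iff A B hD)

end Matrix

theorem solution_lower_bound {n : ℕ} (A X : Matrix (Fin n) (Fin n) ℂ)
    (hX : X.PosDef)
    (heq : X + Aᴴ * (X.map (starRingEnd ℂ))⁻¹ * A = 1) :
    (X - A.map (starRingEnd ℂ) * (1 - A * Aᴴ)⁻¹ * Aᵀ).PosDef := by
  -- `M.map (starRingEnd ℂ)` is both `Mᴴᵀ` and `Mᵀᴴ` by definition.
  change X + Aᴴ * (Xᴴᵀ)⁻¹ * A = 1 at heq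
  change (X - Aᵀᴴ * (1 - A * Aᴴ)⁻¹ * Aᵀ).PosDef
  rw [hX.1] at heq
  have heqT : Xᵀ + Aᵀ * X⁻¹ * Aᵀᴴ = 1 := by
    simpa [transpose_nonsing_inv, Matrix.mul_assoc,
      ← conjTranspose_transpose_eq_transpose_conjTranspose] using congrArg transpose heq
  have hXT_sub : (Xᵀ - A * Aᴴ).PosDef := by
    simpa using (hX.transpose.posDef_schur_complement_comm A PosDef.one).mp
      (eq_sub_of_add_eq heq ▸ hX)
  have hM : (1 - A * Aᴴ).PosDef := by
    rw [← heqT, add_sub_right_comm]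
    exact hXT_sub.add_posSemidef (hX.inv.posSemidef.mul_mul_conjTranspose_same Aᵀ)
  refine (hM.posDef_schur_complement_comm Aᵀ hX).mpr ?_
  rwa [← heqT, add_sub_right_comm, add_sub_cancel_right]
end
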